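/- Let (X_n) be i.i.d. positive random variables with E[X_1] = τ < ∞ and N(t) the associated renewal counting process. Then E[N(t)]/t → 1/τ as t → ∞ (Elementary Renewal Theorem). -/

import Mathlib

/-!
Wald's identity `E[S_{N(t)+1}] = E[X 0] * E[N(t) + 1]` gives both bounds. Since `t < S_{N(t)+1}`,
it yields `t ≤ τ (E[N(t)] + 1)`. Truncating the interarrival times at a level `c` only increases
`N(t)`, and for times bounded by `c` we have `S_{N(t)+1} ≤ t + c`, whence
`E[min (X 0) c] (E[N(t)] + 1) ≤ t + c`; letting `c → ∞`, `E[min (X 0) c] → τ`.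
The strong law of large numbers makes `N(t)` almost surely finite, so the junk value of the
supremum defining `N(t)` is never seen.
-/

open MeasureTheory ProbabilityTheory Filter

/-- Renewal epoch: `rS X n ω = X_1 + ... + X_n` (0-indexed: sum of `X 0, ..., X (n-1)`). -/
noncomputable def rS {Ω : Type*} (X : ℕ → Ω → ℝ) (n : ℕ) (ω : Ω) : ℝ :=
  ∑ i ∈ Finset.range n, X i ω

/-- Renewal counting process: `rN X t ω = sup {n : S_n ≤ t}`. -/
noncomputable def rN {Ω : Type*} (X : ℕ → Ω → ℝ) (t : ℝ) (ω : Ω) : ℕ :=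
  sSup {n | rS X n ω ≤ t}

open scoped ENNReal Topology
open Finset (range)

lemma integral_pos_of_forall_pos {α : Type*} [MeasurableSpace α] {μ : Measure α} [NeZero μ]
    {f : α → ℝ} (hf : ∀ x, 0 < f x) (hfi : Integrable f μ) : 0 < ∫ x, f x ∂μ := by
  rw [integral_pos_iff_support_of_nonneg (fun x => (hf x).le) hfi]
  simp [Function.support, (hf _).ne', NeZero.ne μ]

lemma tendsto_integral_min_const_atTop {α : Type*} [MeasurableSpace α] {μ : Measure α}
    {f : α → ℝ} (hf : Integrable f μ) :
    Tendsto (fun c => ∫ x, min (f x) c ∂μ) atTop (𝓝 (∫ x, f x ∂μ)) := by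
  refine tendsto_integral_filter_of_dominated_convergence (fun x => ‖f x‖)
    (Eventually.of_forall fun c => hf.aestronglyMeasurable.inf aestronglyMeasurable_const)
    ?_ hf.norm (ae_of_all _ fun x => ?_)
  · filter_upwards [eventually_ge_atTop 0] with c hc
    refine ae_of_all _ fun x => ?_
    rcases le_total (f x) c with hfc | hcf
    · rw [min_eq_left hfc]
    · rw [min_eq_right hcf, Real.norm_of_nonneg hc]
      exact hcf.trans (Real.le_norm_self _)
  · refine tendsto_const_nhds.congr' ?_
    filter_upwards [eventually_ge_atTop (f x)] with c hc
    exact (min_eq_left hc).symm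

lemma tendsto_div_atTop_of_affine_bounds {f : ℝ → ℝ} {L : ℝ}
    (hlow : ∀ a < L, ∃ b, ∀ᶠ t in atTop, a * t + b ≤ f t)
    (hup : ∀ a > L, ∃ b, ∀ᶠ t in atTop, f t ≤ a * t + b) :
    Tendsto (fun t => f t / t) atTop (𝓝 L) := by
  have haffine (a b : ℝ) : Tendsto (fun t => (a * t + b) / t) atTop (𝓝 a) := by
    have : Tendsto (fun t => a + b / t) atTop (𝓝 (a + 0)) :=
      tendsto_const_nhds.add (tendsto_const_nhds.div_atTop tendsto_id)
    rw [add_zero] at this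
    refine this.congr' ?_
    filter_upwards [eventually_ne_atTop 0] with t ht
    field_simp
  refine tendsto_order.2 ⟨fun a' ha' => ?_, fun a' ha' => ?_⟩
  · obtain ⟨a, ha', ha⟩ := exists_between ha'
    obtain ⟨b, hb⟩ := hlow a ha
    filter_upwards [(haffine a b).eventually (eventually_gt_nhds ha'), hb,
      eventually_gt_atTop 0] with t hab hft ht
    exact hab.trans_le (div_le_div_of_nonneg_right hft ht.le)
  · obtain ⟨a, ha, ha'⟩ := exists_between ha'
    obtain ⟨b, hb⟩ := hup a ha
    filter_upwards [(haffine a b).eventually (eventually_lt_nhds ha'), hb,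
      eventually_gt_atTop 0] with t hab hft ht
    exact (div_le_div_of_nonneg_right hft ht.le).trans_lt hab

section Pointwise

variable {Ω : Type*} {Y : ℕ → Ω → ℝ} {ω : Ω} {t : ℝ}

lemma rS_eq_sum (n : ℕ) : rS Y n = ∑ i ∈ range n, Y i := by
  ext ω; simp [rS]

lemma rS_zero : rS Y 0 ω = 0 := by simp [rS]

lemma rS_succ (n : ℕ) : rS Y (n + 1) ω = rS Y n ω + Y n ω := by
  simp [rS, Finset.sum_range_succ]

lemma rS_strictMono (hpos : ∀ n, 0 < Y n ω) : StrictMono (rS Y · ω) :=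
  strictMono_nat_of_lt_succ fun n => by simp only [rS_succ]; linarith [hpos n]

lemma rS_le_iff_le_rN (hpos : ∀ n, 0 < Y n ω) (ht : 0 ≤ t)
    (hb : BddAbove {n | rS Y n ω ≤ t}) (m : ℕ) : rS Y m ω ≤ t ↔ m ≤ rN Y t ω := by
  refine ⟨fun h => le_csSup hb h, fun h => ?_⟩
  have hmem : rS Y (rN Y t ω) ω ≤ t := Nat.sSup_mem ⟨0, by simpa [rS_zero] using ht⟩ hb
  exact ((rS_strictMono hpos).monotone h).trans hmem

lemma lt_rS_rN_succ (hpos : ∀ n, 0 < Y n ω) (ht : 0 ≤ t)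
    (hb : BddAbove {n | rS Y n ω ≤ t}) : t < rS Y (rN Y t ω + 1) ω := by
  by_contra! h
  have := (rS_le_iff_le_rN hpos ht hb _).1 h
  omega

lemma tsum_indicator_rS_le (hpos : ∀ n, 0 < Y n ω) (ht : 0 ≤ t)
    (hb : BddAbove {n | rS Y n ω ≤ t}) (g : ℕ → Ω → ℝ≥0∞) :
    ∑' n, {ω | rS Y n ω ≤ t}.indicator (g n) ω = ∑ n ∈ range (rN Y t ω + 1), g n ω := by
  have hmem (n : ℕ) : ω ∈ {ω | rS Y n ω ≤ t} ↔ n ∈ range (rN Y t ω + 1) := by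
    simp only [Set.mem_ofPred_eq, rS_le_iff_le_rN hpos ht hb, Finset.mem_range, Nat.lt_succ_iff]
  rw [tsum_eq_sum fun n hn => Set.indicator_of_notMem (mt (hmem n).1 hn) _]
  exact Finset.sum_congr rfl fun n hn => Set.indicator_of_mem ((hmem n).2 hn) _

lemma rN_le_rN_of_le {Z : ℕ → Ω → ℝ} (hYZ : ∀ n, Y n ω ≤ Z n ω) (ht : 0 ≤ t)
    (hb : BddAbove {n | rS Y n ω ≤ t}) : rN Z t ω ≤ rN Y t ω := by
  refine csSup_le_csSup hb ⟨0, by simpa [rS_zero] using ht⟩ fun n hn => ?_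
  exact le_trans (Finset.sum_le_sum fun i _ => hYZ i) hn

end Pointwise

section Renewal

variable {Ω : Type*} [MeasurableSpace Ω] {μ : Measure Ω} {Y : ℕ → Ω → ℝ} {t : ℝ}

lemma measurable_rS (hm : ∀ n, Measurable (Y n)) (n : ℕ) : Measurable (rS Y n) :=
  Finset.measurable_sum _ fun i _ => hm i

lemma measurableSet_rS_le (hm : ∀ n, Measurable (Y n)) (t : ℝ) (n : ℕ) :
    MeasurableSet {ω | rS Y n ω ≤ t} :=
  measurableSet_le (measurable_rS hm n) measurable_const

/-- As `0 ∈ {n | S_n ≤ t}`, this set is the range of `n ↦ if S_n ≤ t then n else 0`, so `rN Y t`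
is a countable supremum, junk value included. -/
lemma measurable_rN (hm : ∀ n, Measurable (Y n)) (ht : 0 ≤ t) : Measurable (rN Y t) := by
  have hrange (ω : Ω) :
      {n | rS Y n ω ≤ t} = Set.range fun n => if rS Y n ω ≤ t then n else 0 := by
    ext n
    by_cases hn : rS Y n ω ≤ t <;> simp only [Set.mem_ofPred_eq, Set.mem_range]
    · exact ⟨fun _ => ⟨n, if_pos hn⟩, fun _ => hn⟩
    · refine ⟨fun h => absurd h hn, ?_⟩
      rintro ⟨k, hk⟩
      split_ifs at hk with hk'
      · exact hk ▸ hk'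
      · exact hk ▸ by simpa [rS_zero] using ht
  have : rN Y t = fun ω => ⨆ n, if rS Y n ω ≤ t then n else 0 := by
    ext1 ω; rw [rN, hrange]; rfl
  rw [this]
  exact Measurable.iSup fun n =>
    Measurable.ite (measurableSet_rS_le hm t n) measurable_const measurable_const

lemma lintegral_indicator_rS_le (hm : ∀ n, Measurable (Y n)) (hindep : iIndepFun Y μ)
    (hident : ∀ n, IdentDistrib (Y n) (Y 0) μ μ) (t : ℝ) (n : ℕ) :
    ∫⁻ ω, {ω | rS Y n ω ≤ t}.indicator (fun ω => ENNReal.ofReal (Y n ω)) ω ∂μ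
      = (∫⁻ ω, ENNReal.ofReal (Y 0 ω) ∂μ) * μ {ω | rS Y n ω ≤ t} := by
  have hindep_n : IndepFun (fun ω => ENNReal.ofReal (Y n ω))
      ({ω | rS Y n ω ≤ t}.indicator (1 : Ω → ℝ≥0∞)) μ := by
    have : IndepFun (rS Y n) (Y n) μ := by
      rw [rS_eq_sum]; exact hindep.indepFun_sum_range_succ hm n
    exact (this.comp (measurable_const.indicator measurableSet_Iic)
      ENNReal.measurable_ofReal).symm
  calc ∫⁻ ω, {ω | rS Y n ω ≤ t}.indicator (fun ω => ENNReal.ofReal (Y n ω)) ω ∂μ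
      = ∫⁻ ω, ((fun ω => ENNReal.ofReal (Y n ω))
          * {ω | rS Y n ω ≤ t}.indicator (1 : Ω → ℝ≥0∞)) ω ∂μ := by
        congr 1; ext ω; by_cases h : rS Y n ω ≤ t <;> simp [h]
    _ = (∫⁻ ω, ENNReal.ofReal (Y n ω) ∂μ) * ∫⁻ ω, {ω | rS Y n ω ≤ t}.indicator 1 ω ∂μ :=
        lintegral_mul_eq_lintegral_mul_lintegral_of_indepFun (hm n).ennreal_ofReal
          (measurable_const.indicator (measurableSet_rS_le hm t n)) hindep_n
    _ = (∫⁻ ω, ENNReal.ofReal (Y 0 ω) ∂μ) * μ {ω | rS Y n ω ≤ t} := by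
        congr 1
        · exact ((hident n).comp ENNReal.measurable_ofReal).lintegral_eq
        · exact lintegral_indicator_one (measurableSet_rS_le hm t n)

structure IsInterarrivalSeq (μ : Measure Ω) (Y : ℕ → Ω → ℝ) : Prop where
  measurable : ∀ n, Measurable (Y n)
  indep : iIndepFun Y μ
  identDistrib : ∀ n, IdentDistrib (Y n) (Y 0) μ μ
  pos : ∀ n ω, 0 < Y n ω
  integrable : Integrable (Y 0) μ

namespace IsInterarrivalSeq

variable (h : IsInterarrivalSeq μ Y)
include h

lemma min_const {c : ℝ} (hc : 0 < c) : IsInterarrivalSeq μ fun n ω => min (Y n ω) c where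
  measurable n := (h.measurable n).min measurable_const
  indep := h.indep.comp _ fun _ => measurable_id.min measurable_const
  identDistrib n := (h.identDistrib n).comp (measurable_id.min measurable_const)
  pos n ω := lt_min (h.pos n ω) hc
  integrable := h.integrable.mono ((h.measurable 0).min measurable_const).aestronglyMeasurable
    (ae_of_all _ fun ω => by
      simp only [Real.norm_eq_abs, abs_of_pos (h.pos 0 ω), abs_of_pos (lt_min (h.pos 0 ω) hc)]
      exact min_le_left _ _)

/-- By the strong law `S_n / n → E[Y 0] > 0`, so `S_n → ∞`. -/
lemma ae_bddAbove_rS_le [NeZero μ] (t : ℝ) : ∀ᵐ ω ∂μ, BddAbove {n | rS Y n ω ≤ t} := by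
  have hmean : 0 < ∫ ω, Y 0 ω ∂μ := integral_pos_of_forall_pos (h.pos 0) h.integrable
  filter_upwards [strong_law_ae_real Y h.integrable (fun i j hij => h.indep.indepFun hij)
    h.identDistrib] with ω hω
  have hS : Tendsto (fun n : ℕ => rS Y n ω) atTop atTop := by
    refine (hω.pos_mul_atTop hmean tendsto_natCast_atTop_atTop).congr' ?_
    filter_upwards [eventually_ne_atTop 0] with n hn
    exact div_mul_cancel₀ _ (Nat.cast_ne_zero.2 hn)
  obtain ⟨N, hN⟩ := (hS.eventually_gt_atTop t).exists_forall_of_atTop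
  exact ⟨N, fun n hn => by_contra fun hnN => (hN n (not_le.1 hnN).le).not_ge hn⟩

lemma lintegral_rN_add_one [NeZero μ] (ht : 0 ≤ t) :
    ∫⁻ ω, ((rN Y t ω : ℝ≥0∞) + 1) ∂μ = ∑' n, μ {ω | rS Y n ω ≤ t} := by
  calc ∫⁻ ω, ((rN Y t ω : ℝ≥0∞) + 1) ∂μ
      = ∫⁻ ω, ∑' n, {ω | rS Y n ω ≤ t}.indicator 1 ω ∂μ := by
        refine lintegral_congr_ae ((h.ae_bddAbove_rS_le t).mono fun ω hb => ?_)
        dsimp only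
        rw [tsum_indicator_rS_le (h.pos · ω) ht hb]
        simp
    _ = ∑' n, μ {ω | rS Y n ω ≤ t} := by
        rw [lintegral_tsum fun n =>
          (measurable_one.indicator (measurableSet_rS_le h.measurable t n)).aemeasurable]
        exact tsum_congr fun n => lintegral_indicator_one (measurableSet_rS_le h.measurable t n)

/-- Wald's identity: the event `{N(t) + 1 > n} = {S_n ≤ t}` is independent of `Y n`. -/
lemma lintegral_rS_rN_succ [NeZero μ] (ht : 0 ≤ t) :
    ∫⁻ ω, ENNReal.ofReal (rS Y (rN Y t ω + 1) ω) ∂μ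
      = ENNReal.ofReal (∫ ω, Y 0 ω ∂μ) * ∫⁻ ω, ((rN Y t ω : ℝ≥0∞) + 1) ∂μ := by
  calc ∫⁻ ω, ENNReal.ofReal (rS Y (rN Y t ω + 1) ω) ∂μ
      = ∫⁻ ω, ∑' n, {ω | rS Y n ω ≤ t}.indicator (fun ω => ENNReal.ofReal (Y n ω)) ω ∂μ := by
        refine lintegral_congr_ae ((h.ae_bddAbove_rS_le t).mono fun ω hb => ?_)
        dsimp only
        rw [tsum_indicator_rS_le (h.pos · ω) ht hb, rS,
          ENNReal.ofReal_sum_of_nonneg fun n _ => (h.pos n ω).le]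
    _ = (∫⁻ ω, ENNReal.ofReal (Y 0 ω) ∂μ) * ∑' n, μ {ω | rS Y n ω ≤ t} := by
        rw [lintegral_tsum fun n => ((h.measurable n).ennreal_ofReal.indicator
          (measurableSet_rS_le h.measurable t n)).aemeasurable, ← ENNReal.tsum_mul_left]
        exact tsum_congr
          (lintegral_indicator_rS_le h.measurable h.indep h.identDistrib t)
    _ = _ := by
        rw [h.lintegral_rN_add_one ht, ofReal_integral_eq_lintegral_ofReal h.integrable
          (ae_of_all _ fun ω => (h.pos 0 ω).le)]

lemma lintegral_rN_add_one_le_of_le [NeZero μ] {Z : ℕ → Ω → ℝ} (hYZ : ∀ n ω, Y n ω ≤ Z n ω)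
    (ht : 0 ≤ t) :
    ∫⁻ ω, ((rN Z t ω : ℝ≥0∞) + 1) ∂μ ≤ ∫⁻ ω, ((rN Y t ω : ℝ≥0∞) + 1) ∂μ :=
  lintegral_mono_ae ((h.ae_bddAbove_rS_le t).mono fun ω hb => by
    gcongr; exact rN_le_rN_of_le (hYZ · ω) ht hb)

end IsInterarrivalSeq

lemma toReal_lintegral_rN_add_one [IsProbabilityMeasure μ] (hm : ∀ n, Measurable (Y n))
    (ht : 0 ≤ t) (hfin : ∫⁻ ω, ((rN Y t ω : ℝ≥0∞) + 1) ∂μ ≠ ⊤) :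
    (∫⁻ ω, ((rN Y t ω : ℝ≥0∞) + 1) ∂μ).toReal = ∫ ω, (rN Y t ω : ℝ) ∂μ + 1 := by
  have hmN : Measurable fun ω => (rN Y t ω : ℝ≥0∞) :=
    measurable_from_nat.comp (measurable_rN hm ht)
  rw [lintegral_add_right _ measurable_const, lintegral_const, measure_univ, mul_one] at hfin ⊢
  rw [ENNReal.toReal_add (ENNReal.add_ne_top.1 hfin).1 ENNReal.one_ne_top, ENNReal.toReal_one,
    ← integral_toReal hmN.aemeasurable (ae_of_all _ fun _ => ENNReal.natCast_lt_top _)]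
  simp

namespace IsInterarrivalSeq

variable [IsProbabilityMeasure μ] (h : IsInterarrivalSeq μ Y)
include h

lemma ofReal_le_mul_lintegral_rN_add_one (ht : 0 ≤ t) :
    ENNReal.ofReal t ≤ ENNReal.ofReal (∫ ω, Y 0 ω ∂μ) * ∫⁻ ω, ((rN Y t ω : ℝ≥0∞) + 1) ∂μ := by
  rw [← h.lintegral_rS_rN_succ ht]
  calc ENNReal.ofReal t = ∫⁻ _, ENNReal.ofReal t ∂μ := by simp
    _ ≤ _ := lintegral_mono_ae ((h.ae_bddAbove_rS_le t).mono fun ω hb =>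
        ENNReal.ofReal_le_ofReal (lt_rS_rN_succ (h.pos · ω) ht hb).le)

lemma mul_lintegral_rN_add_one_le {c : ℝ} (hc : ∀ n ω, Y n ω ≤ c) (ht : 0 ≤ t) :
    ENNReal.ofReal (∫ ω, Y 0 ω ∂μ) * ∫⁻ ω, ((rN Y t ω : ℝ≥0∞) + 1) ∂μ
      ≤ ENNReal.ofReal (t + c) := by
  rw [← h.lintegral_rS_rN_succ ht]
  calc _ ≤ ∫⁻ _, ENNReal.ofReal (t + c) ∂μ :=
        lintegral_mono_ae ((h.ae_bddAbove_rS_le t).mono fun ω hb => by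
          refine ENNReal.ofReal_le_ofReal ?_
          have hSN := (rS_le_iff_le_rN (h.pos · ω) ht hb _).2 le_rfl
          linarith [rS_succ (Y := Y) (ω := ω) (rN Y t ω), hc (rN Y t ω) ω])
    _ = _ := by simp

lemma lintegral_rN_add_one_ne_top_of_le {c : ℝ} (hc : ∀ n ω, Y n ω ≤ c) (ht : 0 ≤ t) :
    ∫⁻ ω, ((rN Y t ω : ℝ≥0∞) + 1) ∂μ ≠ ⊤ := by
  have hmean : ENNReal.ofReal (∫ ω, Y 0 ω ∂μ) ≠ 0 :=
    (ENNReal.ofReal_pos.2 (integral_pos_of_forall_pos (h.pos 0) h.integrable)).ne'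
  intro htop
  have := h.mul_lintegral_rN_add_one_le hc ht
  rw [htop, ENNReal.mul_top hmean, top_le_iff] at this
  exact ENNReal.ofReal_ne_top this

/-- Comparison with the bounded interarrival times `min (Y n) 1`. -/
lemma lintegral_rN_add_one_ne_top (ht : 0 ≤ t) : ∫⁻ ω, ((rN Y t ω : ℝ≥0∞) + 1) ∂μ ≠ ⊤ :=
  ne_top_of_le_ne_top
    ((h.min_const one_pos).lintegral_rN_add_one_ne_top_of_le (fun _ _ => min_le_right _ _) ht)
    ((h.min_const one_pos).lintegral_rN_add_one_le_of_le (fun _ _ => min_le_left _ _) ht)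

lemma le_integral_mul_integral_rN_add_one (ht : 0 ≤ t) :
    t ≤ (∫ ω, Y 0 ω ∂μ) * (∫ ω, (rN Y t ω : ℝ) ∂μ + 1) := by
  have hfin := h.lintegral_rN_add_one_ne_top ht
  rw [← toReal_lintegral_rN_add_one h.measurable ht hfin,
    ← ENNReal.toReal_ofReal (integral_nonneg fun ω => (h.pos 0 ω).le), ← ENNReal.toReal_mul]
  exact (ENNReal.ofReal_le_iff_le_toReal (ENNReal.mul_ne_top ENNReal.ofReal_ne_top hfin)).1
    (h.ofReal_le_mul_lintegral_rN_add_one ht)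

lemma integral_min_mul_integral_rN_add_one_le {c : ℝ} (hc : 0 < c) (ht : 0 ≤ t) :
    (∫ ω, min (Y 0 ω) c ∂μ) * (∫ ω, (rN Y t ω : ℝ) ∂μ + 1) ≤ t + c := by
  have hZ := h.min_const hc
  rw [← toReal_lintegral_rN_add_one h.measurable ht (h.lintegral_rN_add_one_ne_top ht),
    ← ENNReal.toReal_ofReal (integral_nonneg fun ω => (hZ.pos 0 ω).le), ← ENNReal.toReal_mul]
  refine ENNReal.toReal_le_of_le_ofReal (by linarith) ?_
  calc _ ≤ ENNReal.ofReal (∫ ω, min (Y 0 ω) c ∂μ)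
        * ∫⁻ ω, ((rN (fun n ω => min (Y n ω) c) t ω : ℝ≥0∞) + 1) ∂μ :=
        mul_le_mul_right (hZ.lintegral_rN_add_one_le_of_le (fun _ _ => min_le_left _ _) ht) _
    _ ≤ _ := hZ.mul_lintegral_rN_add_one_le (fun _ _ => min_le_right _ _) ht

lemma eventually_mul_add_le_integral_rN {a : ℝ} (ha : a < 1 / ∫ ω, Y 0 ω ∂μ) :
    ∀ᶠ t in atTop, a * t + -1 ≤ ∫ ω, (rN Y t ω : ℝ) ∂μ := by
  have hmean := integral_pos_of_forall_pos (h.pos 0) h.integrable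
  rw [lt_div_iff₀ hmean] at ha
  filter_upwards [eventually_ge_atTop 0] with t ht
  nlinarith [h.le_integral_mul_integral_rN_add_one ht]

lemma exists_eventually_integral_rN_le {a : ℝ} (ha : a > 1 / ∫ ω, Y 0 ω ∂μ) :
    ∃ b, ∀ᶠ t in atTop, ∫ ω, (rN Y t ω : ℝ) ∂μ ≤ a * t + b := by
  have hmean := integral_pos_of_forall_pos (h.pos 0) h.integrable
  have hconv := (tendsto_integral_min_const_atTop h.integrable).inv₀ hmean.ne'
  rw [gt_iff_lt, one_div] at ha
  obtain ⟨c, hca, hc⟩ :=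
    ((hconv.eventually (eventually_lt_nhds ha)).and (eventually_gt_atTop 0)).exists
  set τc := ∫ ω, min (Y 0 ω) c ∂μ
  have hτc : 0 < τc :=
    integral_pos_of_forall_pos ((h.min_const hc).pos 0) (h.min_const hc).integrable
  rw [inv_lt_iff_one_lt_mul₀ hτc] at hca
  refine ⟨c / τc - 1, ?_⟩
  filter_upwards [eventually_ge_atTop 0] with t ht
  refine le_of_mul_le_mul_left ?_ hτc
  rw [mul_add, mul_sub, mul_div_cancel₀ _ hτc.ne', mul_one]
  nlinarith [h.integral_min_mul_integral_rN_add_one_le hc ht]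

end IsInterarrivalSeq

end Renewal

/-- Elementary renewal theorem: `E[N(t)]/t → 1/τ`. -/
theorem elementary_renewal_theorem
    {Ω : Type*} [MeasurableSpace Ω] (μ : Measure Ω) [IsProbabilityMeasure μ]
    (X : ℕ → Ω → ℝ)
    (hmeas : ∀ n, Measurable (X n))
    (hindep : iIndepFun X μ)
    (hident : ∀ n, IdentDistrib (X n) (X 0) μ μ)
    (hpos : ∀ n ω, 0 < X n ω)
    (hXint : Integrable (X 0) μ)
    (τ : ℝ) (hτ : μ[X 0] = τ) :
    Tendsto (fun t : ℝ => (∫ ω, (rN X t ω : ℝ) ∂μ) / t) atTop (nhds (1 / τ)) := by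
  have h : IsInterarrivalSeq μ X := ⟨hmeas, hindep, hident, hpos, hXint⟩
  subst hτ
  exact tendsto_div_atTop_of_affine_bounds
    (fun _ ha => ⟨-1, h.eventually_mul_add_le_integral_rN ha⟩)
    (fun _ ha => h.exists_eventually_integral_rN_le ha)
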